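/- arXiv:cs/0207040 — 2 statements merged into one kernel-verified Lean document; each statement's English description precedes it below -/
import Mathlib

section
/- Let u, r be binary relations on a set of arguments, a = u ∪ r, d = u ∪ (r - u⁻¹), sa = a - u⁻¹, and let x be a relation with u ⊆ x. Then J_{x/a} = J_{x/d} = J_{x/sa}. -/
/-- The set of `x/y`-acceptable arguments with respect to `S`. -/
def Facc {Arg : Type*} (x y : Arg → Arg → Prop) (S : Set Arg) : Set Arg :=
  {A | ∀ B, x B A → ∃ C ∈ S, y C B}

theorem Facc_mono {Arg : Type*} (x y : Arg → Arg → Prop) : Monotone (Facc x y) := by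
  intro S T hST A hA B hB
  obtain ⟨C, hC, hCB⟩ := hA B hB
  exact ⟨C, hST hC, hCB⟩

/-- `Facc` as an order homomorphism. -/
def Fhom {Arg : Type*} (x y : Arg → Arg → Prop) : Set Arg →o Set Arg :=
  ⟨Facc x y, Facc_mono x y⟩

/-- The least-fixpoint argumentation semantics: the set of `x/y`-justified arguments. -/
def Jlfp {Arg : Type*} (x y : Arg → Arg → Prop) : Set Arg :=
  OrderHom.lfp (Fhom x y)

/-!
Strengthening the defence relation can only enlarge `J`, so `J_{x/sa} ⊆ J_{x/d} ⊆ J_{x/a}`.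
Conversely, a defence `(C, B) ∈ a` that is missing from `sa` has `(B, C) ∈ u ⊆ x`; a justified
`C` is then itself defended against `B` by some justified `C'` with `(C', B) ∈ sa`. Hence
`J_{x/sa}` is a pre-fixpoint of `F_{x/a}` and contains `J_{x/a}`.
-/

section

variable {Arg : Type*} (x : Arg → Arg → Prop)

theorem Facc_Jlfp (y : Arg → Arg → Prop) : Facc x y (Jlfp x y) = Jlfp x y :=
  OrderHom.map_lfp (Fhom x y)

theorem Facc_mono_right {y y' : Arg → Arg → Prop} (h : y ≤ y') (S : Set Arg) :
    Facc x y S ⊆ Facc x y' S := by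
  intro A hA B hB
  obtain ⟨C, hC, hCB⟩ := hA B hB
  exact ⟨C, hC, h C B hCB⟩

theorem Jlfp_mono_right {y y' : Arg → Arg → Prop} (h : y ≤ y') : Jlfp x y ⊆ Jlfp x y' :=
  OrderHom.lfp_le _ <| (Facc_mono_right x h _).trans (Facc_Jlfp x y').subset

theorem Jlfp_subset_of_le_or_converse {y y' : Arg → Arg → Prop}
    (h : ∀ C B, y C B → y' C B ∨ x B C) : Jlfp x y ⊆ Jlfp x y' := by
  set L := Jlfp x y'
  have hL : Facc x y' L = L := Facc_Jlfp x y'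
  refine OrderHom.lfp_le (Fhom x y) fun A hA => hL ▸ fun B hB => ?_
  obtain ⟨C, hC, hCB⟩ := hA B hB
  rcases h C B hCB with hCB' | hBC
  · exact ⟨C, hC, hCB'⟩
  · exact (hL.symm ▸ hC : C ∈ Facc x y' L) B hBC

end

/-- If `u ⊆ x`, then attack, defeat and strong attack coincide as defence:
`J_{x/a} = J_{x/d} = J_{x/sa}`. -/
theorem Jlfp_att_def_satt_defence {Arg : Type*} (u r x a d sa : Arg → Arg → Prop)
    (ha : ∀ A B, a A B ↔ u A B ∨ r A B)
    (hd : ∀ A B, d A B ↔ u A B ∨ (r A B ∧ ¬ u B A))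
    (hsa : ∀ A B, sa A B ↔ a A B ∧ ¬ u B A)
    (hux : ∀ A B, u A B → x A B) :
    Jlfp x a = Jlfp x d ∧ Jlfp x d = Jlfp x sa := by
  have hsad : sa ≤ d := fun A B h => by grind
  have hda : d ≤ a := fun A B h => by grind
  have has : ∀ C B, a C B → sa C B ∨ x B C := fun C B h => by
    by_cases hu : u B C
    · exact .inr (hux B C hu)
    · exact .inl ((hsa C B).2 ⟨h, hu⟩)
  have h_sa_d := Jlfp_mono_right x hsad
  have h_d_a := Jlfp_mono_right x hda
  have h_a_sa := Jlfp_subset_of_le_or_converse x has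
  exact ⟨(h_d_a.antisymm (h_a_sa.trans h_sa_d)).symm,
    (h_d_a.trans h_a_sa).antisymm h_sa_d⟩
end

section
/- Dung's grounded argumentation semantics J_{a/u} satisfies J_{a/u} = J_{a/su} = J_{a/a} = J_{a/d} = J_{a/sa}, and J_{a/u} ⊆ J_{x/y} for all notions of attack x ∈ {u, a, d, su, sa} and all defence relations y among these. -/
section

variable {Arg : Type*}

theorem Jlfp_fix (x y : Arg → Arg → Prop) :
    Facc x y (Jlfp x y) = Jlfp x y :=
  OrderHom.map_lfp (Fhom x y)

theorem Jlfp_anti_mono {x x' y y' : Arg → Arg → Prop}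
    (hx : x' ≤ x) (hy : y ≤ y') : Jlfp x y ⊆ Jlfp x' y' := by
  refine OrderHom.lfp_le (Fhom x y) fun A hA => ?_
  rw [← Jlfp_fix x' y']
  intro B hB
  obtain ⟨C, hC, hCB⟩ := hA B (hx _ _ hB)
  exact ⟨C, hC, hy _ _ hCB⟩

theorem Jlfp_self_subset_of_reversible {x z : Arg → Arg → Prop}
    (hrev : ∀ C B, x C B → z C B ∨ x B C) : Jlfp x x ⊆ Jlfp x z := by
  refine OrderHom.lfp_le (Fhom x x) fun A hA => ?_
  rw [← Jlfp_fix x z]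
  intro B hB
  obtain ⟨C, hC, hCB⟩ := hA B hB
  rcases hrev C B hCB with hzCB | hxBC
  · exact ⟨C, hC, hzCB⟩
  · rw [← Jlfp_fix x z] at hC
    exact hC B hxBC

theorem Jlfp_eq_self_of_reversible {x y z : Arg → Arg → Prop}
    (hrev : ∀ C B, x C B → z C B ∨ x B C) (hzy : z ≤ y) (hyx : y ≤ x) :
    Jlfp x y = Jlfp x x :=
  (Jlfp_anti_mono le_rfl hyx).antisymm
    ((Jlfp_self_subset_of_reversible hrev).trans (Jlfp_anti_mono le_rfl hzy))

end

/-- Dung's grounded semantics `J_{a/u}` is invariant under the choice of defence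
and is the most sceptical of all the notions of justifiability. -/
theorem dung_semantics_least {Arg : Type*} (u r a d sa su : Arg → Arg → Prop)
    (hr : ∀ A B, r A B → r B A)
    (ha : ∀ A B, a A B ↔ u A B ∨ r A B)
    (hd : ∀ A B, d A B ↔ u A B ∨ (r A B ∧ ¬ u B A))
    (hsa : ∀ A B, sa A B ↔ a A B ∧ ¬ u B A)
    (hsu : ∀ A B, su A B ↔ u A B ∧ ¬ u B A) :
    (Jlfp a u = Jlfp a su ∧ Jlfp a u = Jlfp a a ∧ Jlfp a u = Jlfp a d ∧
      Jlfp a u = Jlfp a sa) ∧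
    (∀ x y : Arg → Arg → Prop,
      (x = u ∨ x = a ∨ x = d ∨ x = su ∨ x = sa) →
      (y = u ∨ y = a ∨ y = d ∨ y = su ∨ y = sa) →
      Jlfp a u ⊆ Jlfp x y) := by
  have hsu_u : su ≤ u := fun A B h => ((hsu A B).1 h).1
  have hu_a : u ≤ a := fun A B h => (ha A B).2 (.inl h)
  have hsu_d : su ≤ d := fun A B h => (hd A B).2 (.inl (hsu_u A B h))
  have hsu_sa : su ≤ sa := fun A B h => (hsa A B).2 ⟨hu_a A B (hsu_u A B h), ((hsu A B).1 h).2⟩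
  have hd_a : d ≤ a := fun A B h => (ha A B).2 (((hd A B).1 h).imp_right And.left)
  have hsa_a : sa ≤ a := fun A B h => ((hsa A B).1 h).1
  have hrev : ∀ C B, a C B → su C B ∨ a B C := by
    intro C B hCB
    by_cases huBC : u B C
    · exact .inr (hu_a B C huBC)
    rcases (ha C B).1 hCB with huCB | hrCB
    · exact .inl ((hsu C B).2 ⟨huCB, huBC⟩)
    · exact .inr ((ha B C).2 (.inr (hr C B hrCB)))
  have key : ∀ y, su ≤ y → y ≤ a → Jlfp a y = Jlfp a a :=
    fun y hsu_y hy_a => Jlfp_eq_self_of_reversible hrev hsu_y hy_a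
  have hJu := key u hsu_u hu_a
  have hJsu := key su le_rfl (hsu_u.trans hu_a)
  refine ⟨⟨hJu.trans hJsu.symm, hJu, hJu.trans (key d hsu_d hd_a).symm,
    hJu.trans (key sa hsu_sa hsa_a).symm⟩, fun x y hx hy => ?_⟩
  have hx_a : x ≤ a := by
    rcases hx with rfl | rfl | rfl | rfl | rfl
    exacts [hu_a, le_rfl, hd_a, hsu_u.trans hu_a, hsa_a]
  have hsu_y : su ≤ y := by
    rcases hy with rfl | rfl | rfl | rfl | rfl
    exacts [hsu_u, hsu_u.trans hu_a, hsu_d, le_rfl, hsu_sa]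
  rw [hJu, ← hJsu]
  exact Jlfp_anti_mono hx_a hsu_y
end
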